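/- arXiv:1305.4339 — 6 statements merged into one kernel-verified Lean document; each statement's English description precedes it below -/
import Mathlib

section
/- Let Y ⊆ {0,1}^n be a predictive space of the form Y = ⋂_{k=1}^K C_k where C_k = {y ∈ {0,1}^n : ∑_{i ∈ I_k} y_i ≤ 1} for index sets I_k ⊆ {1,…,n}. Let Θ be a finite parameter space with probability distribution p on Θ, and let F_i : Θ × {0,1} → ℝ≥0 be pointwise gain components satisfying F_i(θ,1) − F_i(θ,0) + F_j(θ,1) − F_j(θ,0) ≤ 0 for every θ ∈ Θ and every i ≠ j both in some I_k. Define the consensus estimator ŷ^(c) componentwise by ŷ^(c)_i = argmax_{b∈{0,1}} ∑_θ F_i(θ,b) p(θ). Then ŷ^(c) ∈ Y. -/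
/-!
If two coordinates `i ≠ j` of one constraint set were both switched on, each would have a positive
expected gain increment `∑ θ, (F i θ true - F i θ false) * p θ`. The pairwise condition makes the sum
of the two increments nonpositive pointwise in `θ`, hence also in expectation, a contradiction.
-/

open Finset

lemma sum_boole_le_one_of_forall_eq {ι : Type*} (s : Finset ι) (P : ι → Prop) [DecidablePred P]
    (h : ∀ i ∈ s, ∀ j ∈ s, P i → P j → i = j) :
    (∑ i ∈ s, if P i then 1 else 0 : ℕ) ≤ 1 := by
  rw [← card_filter, card_le_one]
  intro i hi j hj
  rw [mem_filter] at hi hj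
  exact h i hi.1 j hj.1 hi.2 hj.2

lemma sum_mul_add_sum_mul_nonpos {Θ : Type*} (s : Finset Θ) (p a b : Θ → ℝ)
    (hp : ∀ θ ∈ s, 0 ≤ p θ) (hab : ∀ θ ∈ s, a θ + b θ ≤ 0) :
    ∑ θ ∈ s, a θ * p θ + ∑ θ ∈ s, b θ * p θ ≤ 0 := by
  rw [← sum_add_distrib]
  exact sum_nonpos fun θ hθ => by nlinarith [hp θ hθ, hab θ hθ]

lemma decide_sum_lt_sum_iff {Θ : Type*} (s : Finset Θ) (p f₀ f₁ : Θ → ℝ) :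
    decide (∑ θ ∈ s, f₀ θ * p θ < ∑ θ ∈ s, f₁ θ * p θ) = true ↔
      0 < ∑ θ ∈ s, (f₁ θ - f₀ θ) * p θ := by
  simp only [decide_eq_true_iff, sub_mul, sum_sub_distrib, sub_pos]

theorem stmt0_general {n K : ℕ} (I : Fin K → Finset (Fin n))
    {Θ : Type*} [Fintype Θ] (p : Θ → ℝ)
    (hp0 : ∀ θ, 0 ≤ p θ)
    (F : Fin n → Θ → Bool → ℝ)
    (hpair : ∀ (θ : Θ) (k : Fin K), ∀ i ∈ I k, ∀ j ∈ I k, i ≠ j →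
      F i θ true - F i θ false + F j θ true - F j θ false ≤ 0)
    (yc : Fin n → Bool)
    (hyc : ∀ i, yc i = decide ((∑ θ, F i θ false * p θ) < ∑ θ, F i θ true * p θ)) :
    ∀ k : Fin K, (∑ i ∈ I k, if yc i then 1 else 0 : ℕ) ≤ 1 := by
  intro k
  refine sum_boole_le_one_of_forall_eq _ _ fun i hi j hj hyi hyj => by_contra fun hij => ?_
  rw [hyc, decide_sum_lt_sum_iff] at hyi hyj
  have hsum := sum_mul_add_sum_mul_nonpos univ p (fun θ => F i θ true - F i θ false)
    (fun θ => F j θ true - F j θ false) (fun θ _ => hp0 θ)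
    (fun θ _ => by linarith [hpair θ k i hi j hj hij])
  linarith

/-- consensus estimator lies in the predictive space
`Y = ⋂_k {y : ∑_{i ∈ I_k} y_i ≤ 1}` under the pairwise gain condition. -/
theorem stmt0 {n K : ℕ} (I : Fin K → Finset (Fin n))
    {Θ : Type*} [Fintype Θ] (p : Θ → ℝ)
    (hp0 : ∀ θ, 0 ≤ p θ) (hp1 : ∑ θ, p θ = 1)
    (F : Fin n → Θ → Bool → ℝ) (hF0 : ∀ i θ b, 0 ≤ F i θ b)
    (hpair : ∀ (θ : Θ) (k : Fin K), ∀ i ∈ I k, ∀ j ∈ I k, i ≠ j →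
      F i θ true - F i θ false + F j θ true - F j θ false ≤ 0)
    (yc : Fin n → Bool)
    (hyc : ∀ i, yc i = decide ((∑ θ, F i θ false * p θ) < ∑ θ, F i θ true * p θ)) :
    ∀ k : Fin K, (∑ i ∈ I k, if yc i then 1 else 0 : ℕ) ≤ 1 :=
  stmt0_general I p hp0 F hpair yc hyc
end

section
/- Under the hypotheses of the previous setting (Y = ⋂ C_k, pointwise gain with the pairwise condition F_i(θ,1)−F_i(θ,0)+F_j(θ,1)−F_j(θ,0) ≤ 0 for i,j in a common I_k), the consensus estimator ŷ^(c) maximizes the expected gain E[G(θ,y)] over all y ∈ Y; that is, ŷ^(c) is a maximum expected gain (MEG) estimator. -/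
/-!
The expected gain splits over coordinates as `∑ᵢ Ḡᵢ(yᵢ)` with `Ḡᵢ(b) = ∑_θ Fᵢ(θ, b) p(θ)`, so the
consensus estimator, which maximises every `Ḡᵢ` separately, maximises it over all of `{0,1}ⁿ`.
It lies in `Y`: averaging the pairwise condition over `θ` shows that two coordinates of one block
`I_k` cannot both have `Ḡᵢ(0) < Ḡᵢ(1)`.
-/

open Finset

theorem Bool.apply_le_apply_decide_lt {α : Type*} [LinearOrder α] (g : Bool → α) (b : Bool) :
    g b ≤ g (decide (g false < g true)) := by
  by_cases h : g false < g true <;> cases b <;> simp [h, le_of_lt, not_lt.mp]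

theorem sum_boole_le_one_of_pairwise {ι : Type*} (s : Finset ι) (b : ι → Bool)
    (h : ∀ i ∈ s, ∀ j ∈ s, b i → b j → i = j) :
    (∑ i ∈ s, if b i then 1 else 0 : ℕ) ≤ 1 := by
  rw [← card_filter]
  refine card_le_one.mpr fun i hi j hj => ?_
  rw [mem_filter] at hi hj
  exact h i hi.1 j hj.1 hi.2 hj.2

section ExpectedGain

variable {ι Θ : Type*} [Fintype Θ] (p : Θ → ℝ) (F : ι → Θ → Bool → ℝ)

def expectedCoordGain (i : ι) (b : Bool) : ℝ := ∑ θ, F i θ b * p θ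

theorem sum_mul_sum_eq_sum_expectedCoordGain [Fintype ι] (y : ι → Bool) :
    ∑ θ, (∑ i, F i θ (y i)) * p θ = ∑ i, expectedCoordGain p F i (y i) := by
  simp only [expectedCoordGain, sum_mul]
  exact sum_comm

theorem expectedCoordGain_not_lt_and_lt (hp : ∀ θ, 0 ≤ p θ) {i j : ι}
    (h : ∀ θ, F i θ true - F i θ false + F j θ true - F j θ false ≤ 0) :
    ¬ (expectedCoordGain p F i false < expectedCoordGain p F i true ∧
      expectedCoordGain p F j false < expectedCoordGain p F j true) := by
  rintro ⟨hi, hj⟩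
  have hsum : expectedCoordGain p F i true - expectedCoordGain p F i false +
      expectedCoordGain p F j true - expectedCoordGain p F j false =
      ∑ θ, (F i θ true - F i θ false + F j θ true - F j θ false) * p θ := by
    simp only [expectedCoordGain, ← sum_sub_distrib, ← sum_add_distrib]
    exact sum_congr rfl fun θ _ => by ring
  have hnonpos := sum_nonpos fun θ (_ : θ ∈ univ) => mul_nonpos_of_nonpos_of_nonneg (h θ) (hp θ)
  linarith

end ExpectedGain

theorem stmt1_general {n K : ℕ} (I : Fin K → Finset (Fin n))
    {Θ : Type*} [Fintype Θ] (p : Θ → ℝ)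
    (hp0 : ∀ θ, 0 ≤ p θ)
    (F : Fin n → Θ → Bool → ℝ)
    (hpair : ∀ (θ : Θ) (k : Fin K), ∀ i ∈ I k, ∀ j ∈ I k, i ≠ j →
      F i θ true - F i θ false + F j θ true - F j θ false ≤ 0)
    (yc : Fin n → Bool)
    (hyc : ∀ i, yc i = decide ((∑ θ, F i θ false * p θ) < ∑ θ, F i θ true * p θ)) :
    (∀ k : Fin K, (∑ i ∈ I k, if yc i then 1 else 0 : ℕ) ≤ 1) ∧
    (∀ y : Fin n → Bool, (∀ k : Fin K, (∑ i ∈ I k, if y i then 1 else 0 : ℕ) ≤ 1) →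
      (∑ θ, (∑ i, F i θ (y i)) * p θ) ≤ ∑ θ, (∑ i, F i θ (yc i)) * p θ) := by
  refine ⟨fun k => sum_boole_le_one_of_pairwise _ _ fun i hi j hj hyi hyj => ?_, fun y _ => ?_⟩
  · by_contra hij
    rw [hyc] at hyi hyj
    exact expectedCoordGain_not_lt_and_lt p F hp0 (fun θ => hpair θ k i hi j hj hij)
      ⟨of_decide_eq_true hyi, of_decide_eq_true hyj⟩
  · rw [sum_mul_sum_eq_sum_expectedCoordGain, sum_mul_sum_eq_sum_expectedCoordGain]
    refine sum_le_sum fun i _ => ?_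
    rw [hyc i]
    exact Bool.apply_le_apply_decide_lt (expectedCoordGain p F i) (y i)

/-- the consensus estimator maximizes the expected pointwise gain
over the predictive space `Y = ⋂_k {y : ∑_{i ∈ I_k} y_i ≤ 1}`. -/
theorem stmt1 {n K : ℕ} (I : Fin K → Finset (Fin n))
    {Θ : Type*} [Fintype Θ] (p : Θ → ℝ)
    (hp0 : ∀ θ, 0 ≤ p θ) (hp1 : ∑ θ, p θ = 1)
    (F : Fin n → Θ → Bool → ℝ) (hF0 : ∀ i θ b, 0 ≤ F i θ b)
    (hpair : ∀ (θ : Θ) (k : Fin K), ∀ i ∈ I k, ∀ j ∈ I k, i ≠ j →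
      F i θ true - F i θ false + F j θ true - F j θ false ≤ 0)
    (yc : Fin n → Bool)
    (hyc : ∀ i, yc i = decide ((∑ θ, F i θ false * p θ) < ∑ θ, F i θ true * p θ)) :
    (∀ k : Fin K, (∑ i ∈ I k, if yc i then 1 else 0 : ℕ) ≤ 1) ∧
    (∀ y : Fin n → Bool, (∀ k : Fin K, (∑ i ∈ I k, if y i then 1 else 0 : ℕ) ≤ 1) →
      (∑ θ, (∑ i, F i θ (y i)) * p θ) ≤ ∑ θ, (∑ i, F i θ (yc i)) * p θ) :=
  stmt1_general I p hp0 F hpair yc hyc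
end

section
/- Let Y = ⋂_{k=1}^K {y ∈ {0,1}^n : ∑_{i∈I_k} y_i ≤ 1}, p a distribution on Y, γ ∈ [0,1], and p_i the marginal probability of coordinate i. Then the vector y* with y*_i = 1 if p_i > 1/(γ+1) and y*_i = 0 otherwise lies in Y and maximizes the expected γ-centroid gain ∑_i [(γ+1)p_i−1]I(y_i=1) over Y. -/
/-!
A constraint set `I k` contains at most one `1` of every `θ ∈ Y`, so the marginals of two
distinct coordinates of `I k` add up to at most `1`; as `γ ≤ 1` forces `1/(γ+1) ≥ 1/2`, at most
one coordinate per constraint set clears the threshold, and `y*` is feasible. The expected gain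
is a sum of independent terms `((γ+1) p_i - 1) y_i`, each maximised by switching `y_i` on exactly
when its coefficient is positive, which is what the threshold does.
-/

open Finset

theorem Finset.sum_boole_le_one_iff {ι : Type*} (s : Finset ι) (y : ι → Bool) :
    (∑ i ∈ s, if y i then 1 else 0 : ℕ) ≤ 1 ↔
      ∀ i ∈ s, ∀ j ∈ s, y i = true → y j = true → i = j := by
  rw [sum_boole, Nat.cast_id, card_le_one]
  simp only [mem_filter]
  exact ⟨fun h i hi j hj hyi hyj => h i ⟨hi, hyi⟩ j ⟨hj, hyj⟩,
    fun h i hi j hj => h i hi.1 j hj.1 hi.2 hj.2⟩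

theorem Finset.sum_mul_boole_le_of_pos_iff {ι : Type*} (s : Finset ι) (c : ι → ℝ)
    (y y' : ι → Bool) (hy' : ∀ i, y' i = true ↔ 0 < c i) :
    ∑ i ∈ s, c i * (if y i then 1 else 0) ≤ ∑ i ∈ s, c i * (if y' i then 1 else 0) := by
  refine sum_le_sum fun i _ => ?_
  by_cases hc : 0 < c i
  · have : y' i = true := (hy' i).2 hc
    cases y i <;> simp [this, hc.le]
  · have : y' i = false := by simpa [← hy' i] using hc
    cases y i <;> simp [this, not_lt.1 hc]

noncomputable def marginal {α : Type*} (Y : Finset (α → Bool)) (p : (α → Bool) → ℝ) (i : α) : ℝ :=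
  ∑ θ ∈ Y, (if θ i then 1 else 0) * p θ

theorem marginal_add_marginal_le_one {α : Type*} {Y : Finset (α → Bool)} {p : (α → Bool) → ℝ}
    (hp0 : ∀ θ ∈ Y, 0 ≤ p θ) (hp1 : ∑ θ ∈ Y, p θ = 1) {i j : α}
    (hij : ∀ θ ∈ Y, θ i = true → θ j = false) :
    marginal Y p i + marginal Y p j ≤ 1 := by
  calc marginal Y p i + marginal Y p j
      = ∑ θ ∈ Y, ((if θ i then 1 else 0) + (if θ j then 1 else 0)) * p θ := by
        simp only [marginal, ← sum_add_distrib, add_mul]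
    _ ≤ ∑ θ ∈ Y, p θ := sum_le_sum fun θ hθ => ?_
    _ = 1 := hp1
  cases hi : θ i
  · cases θ j <;> simp [hp0 θ hθ]
  · simp [hij θ hθ hi]

/-- for γ ∈ [0,1] on a space of 'at most one 1 per constraint set'
type, the thresholded vector y* (y*_i = 1 iff p_i > 1/(γ+1)) is feasible and
maximizes the expected γ-centroid gain. -/
theorem stmt6 {n K : ℕ} (I : Fin K → Finset (Fin n))
    (Y : Finset (Fin n → Bool))
    (hY : ∀ y : Fin n → Bool, y ∈ Y ↔ ∀ k, (∑ i ∈ I k, if y i then 1 else 0 : ℕ) ≤ 1)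
    (p : (Fin n → Bool) → ℝ) (hp0 : ∀ θ, 0 ≤ p θ) (hp1 : ∑ θ ∈ Y, p θ = 1)
    (γ : ℝ) (hγ0 : 0 ≤ γ) (hγ1 : γ ≤ 1)
    (pm : Fin n → ℝ) (hpm : ∀ i, pm i = ∑ θ ∈ Y, (if θ i then (1:ℝ) else 0) * p θ)
    (ystar : Fin n → Bool) (hystar : ∀ i, ystar i = decide (1/(γ+1) < pm i)) :
    ystar ∈ Y ∧
    ∀ y ∈ Y, (∑ i, ((γ + 1) * pm i - 1) * (if y i then (1:ℝ) else 0))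
        ≤ ∑ i, ((γ + 1) * pm i - 1) * (if ystar i then (1:ℝ) else 0) := by
  have hγ : 0 < γ + 1 := by linarith
  have hthreshold : ∀ i, ystar i = true ↔ 0 < (γ + 1) * pm i - 1 := fun i => by
    rw [hystar i, decide_eq_true_iff, div_lt_iff₀ hγ]
    constructor <;> intro h <;> linarith
  simp only [sum_boole_le_one_iff] at hY
  refine ⟨(hY ystar).2 fun k i hi j hj hyi hyj => ?_,
    fun y _ => sum_mul_boole_le_of_pos_iff _ _ y ystar hthreshold⟩
  by_contra hne
  have hpair : pm i + pm j ≤ 1 := by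
    rw [hpm i, hpm j]
    exact marginal_add_marginal_le_one (fun θ _ => hp0 θ) hp1 fun θ hθ hθi =>
      Bool.eq_false_iff.2 fun hθj => hne ((hY θ).1 hθ k i hi j hj hθi hθj)
  nlinarith [(hthreshold i).1 hyi, (hthreshold j).1 hyj]
end

section
/- For γ > 1, the conclusion of the consensus-estimator corollary can fail: there exist n, a predictive space Y = ⋂_k C_k of 'at most one 1' type, a probability distribution p on Y, and γ > 1 such that the thresholded vector y* (y*_i = 1 iff p_i > 1/(γ+1)) is not a member of Y. -/
/-!
Let `p` be uniform on the `n ≥ 2` unit vectors of `{0,1}^n`. Each of them has at most one `1`,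
so `p` lives on the space cut out by the single constraint `∑ i, y i ≤ 1`, yet every marginal
equals `1/n`. For `γ = n` the threshold `1/(γ+1)` lies below `1/n`, so thresholding the
marginals gives the all-ones vector, which violates the constraint.
-/

open Finset

section UniformOn

variable {α : Type*} [DecidableEq α]

noncomputable def uniformOn (S : Finset α) (y : α) : ℝ :=
  if y ∈ S then (#S : ℝ)⁻¹ else 0

lemma uniformOn_nonneg (S : Finset α) (y : α) : 0 ≤ uniformOn S y := by
  unfold uniformOn
  split_ifs <;> positivity

lemma mem_of_uniformOn_ne_zero {S : Finset α} {y : α} (h : uniformOn S y ≠ 0) : y ∈ S := by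
  by_contra hy
  exact h (if_neg hy)

variable [Fintype α]

lemma sum_indicator_mul_uniformOn (S : Finset α) (P : α → Prop) [DecidablePred P] :
    ∑ y, (if P y then (1 : ℝ) else 0) * uniformOn S y = #{y ∈ S | P y} / #S := by
  simp only [uniformOn, ite_mul, one_mul, zero_mul, ← ite_and, and_comm (a := P _)]
  rw [sum_ite, sum_const_zero, add_zero, sum_const, nsmul_eq_mul,
    div_eq_mul_inv, filter_and, filter_mem_eq_inter, univ_inter, inter_filter, inter_univ]

lemma sum_uniformOn {S : Finset α} (hS : S.Nonempty) : ∑ y, uniformOn S y = 1 := by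
  have h := sum_indicator_mul_uniformOn S (fun _ => True)
  simp only [if_true, one_mul, filter_true] at h
  rw [h, div_self (Nat.cast_ne_zero.mpr hS.card_pos.ne')]

end UniformOn

section UnitVec

variable {ι : Type*} [DecidableEq ι]

def unitVec (i : ι) : ι → Bool := fun j => decide (j = i)

lemma unitVec_injective : Function.Injective (unitVec (ι := ι)) := fun i j h => by
  simpa [unitVec] using congrFun h i

lemma sum_unitVec_le_one (i : ι) (s : Finset ι) :
    (∑ j ∈ s, if unitVec i j then 1 else 0 : ℕ) ≤ 1 := by
  simp only [unitVec, decide_eq_true_eq, sum_ite_eq']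
  split_ifs <;> omega

variable [Fintype ι]

def unitVecs (ι : Type*) [Fintype ι] [DecidableEq ι] : Finset (ι → Bool) :=
  univ.image unitVec

lemma card_unitVecs : #(unitVecs ι) = Fintype.card ι :=
  card_image_of_injective _ unitVec_injective

lemma marginal_uniformOn_unitVecs (i : ι) :
    ∑ y, (if y i then (1 : ℝ) else 0) * uniformOn (unitVecs ι) y = 1 / Fintype.card ι := by
  have hfilter : {y ∈ unitVecs ι | y i = true} = {unitVec i} := by
    ext y
    simp only [unitVecs, mem_filter, mem_image, mem_univ, true_and, mem_singleton]
    constructor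
    · rintro ⟨⟨j, -, rfl⟩, hj⟩
      simp only [unitVec, decide_eq_true_eq] at hj
      rw [hj]
    · rintro rfl
      exact ⟨⟨i, rfl⟩, decide_eq_true rfl⟩
  rw [sum_indicator_mul_uniformOn, hfilter, card_singleton, card_unitVecs, Nat.cast_one]

end UnitVec

/-- for γ > 1 the thresholded vector can fail to lie in the
predictive space. -/
theorem stmt8 : ∃ (n K : ℕ) (I : Fin K → Finset (Fin n))
    (p : (Fin n → Bool) → ℝ) (γ : ℝ),
    1 < γ ∧ (∀ y, 0 ≤ p y) ∧ (∑ y, p y) = 1 ∧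
    (∀ y : Fin n → Bool, p y ≠ 0 → ∀ k, (∑ i ∈ I k, if y i then 1 else 0 : ℕ) ≤ 1) ∧
    ¬ (∀ k, (∑ i ∈ I k,
        if decide (1/(γ+1) < ∑ y : Fin n → Bool, (if y i then (1:ℝ) else 0) * p y)
        then 1 else 0 : ℕ) ≤ 1) := by
  refine ⟨2, 1, fun _ => univ, uniformOn (unitVecs (Fin 2)), 2, by norm_num,
    uniformOn_nonneg _, sum_uniformOn ⟨unitVec 0, mem_image_of_mem _ (mem_univ 0)⟩, ?_, ?_⟩
  · intro y hy k
    obtain ⟨i, -, rfl⟩ := mem_image.mp (mem_of_uniformOn_ne_zero hy)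
    exact sum_unitVec_le_one i univ
  · have hthreshold : (1 : ℝ) / (2 + 1) < 1 / Fintype.card (Fin 2) := by norm_num
    simp only [marginal_uniformOn_unitVecs, hthreshold, decide_true, if_true]
    exact fun h => absurd (h 0) (by simp)
end

section
/- Combining the representative equivalence with the γ-centroid consensus corollary: if Y = ⋂_k {y : ∑_{i∈I_k} y_i ≤ 1}, γ ∈ [0,1], and p̄_i = (1/K)∑_k p^(k)_i are the averaged marginals, then the vector y* with y*_i = 1 iff p̄_i > 1/(γ+1) belongs to Y and maximizes the expected homogeneous γ-centroid gain ∑_{k=1}^K ∑_i [γI(θ^k_i=1)I(y_i=1)+I(θ^k_i=0)I(y_i=0)] over y ∈ Y, where expectation is under the product distribution ∏_k p^(k). -/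
/-!
By independence and linearity, the expected total gain of `y` is
`K * ∑ i, (if y i then γ * p̄ i else 1 - p̄ i)`, so it is maximized coordinatewise by
`y i = (p̄ i > 1 / (γ + 1))`. This choice is feasible: every `p k` is supported on `Y`,
so the `p̄ i` sum to at most `1` over each constraint set, and since `1 / (γ + 1) ≥ 1 / 2`
at most one of them exceeds the threshold.
-/

open Finset

namespace CentroidConsensus

section Product

variable {ι α R : Type*} [Fintype ι] [DecidableEq ι] [Fintype α] [CommSemiring R]

theorem sum_pi_apply_mul_prod {p : ι → α → R} (hp : ∀ j, ∑ a, p j a = 1) (k : ι) (g : α → R) :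
    ∑ θ : ι → α, g (θ k) * ∏ j, p j (θ j) = ∑ a, g a * p k a := by
  have hfactor : ∀ j, ∑ a, (if j = k then g a else 1) * p j a
      = if j = k then ∑ a, g a * p k a else 1 := by
    intro j
    split_ifs with hj
    · rw [hj]
    · simp [hp]
  calc ∑ θ : ι → α, g (θ k) * ∏ j, p j (θ j)
      = ∑ θ : ι → α, ∏ j, (if j = k then g (θ j) else 1) * p j (θ j) := by
        simp_rw [prod_mul_distrib, Fintype.prod_ite_eq']
    _ = ∏ j, ∑ a, (if j = k then g a else 1) * p j a :=
        (Fintype.prod_sum fun j a => (if j = k then g a else 1) * p j a).symm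
    _ = ∑ a, g a * p k a := by simp_rw [hfactor, Fintype.prod_ite_eq']

theorem sum_pi_sum_mul_prod {p : ι → α → R} (hp : ∀ j, ∑ a, p j a = 1) (f : ι → α → R) :
    ∑ θ : ι → α, (∑ k, f k (θ k)) * ∏ j, p j (θ j) = ∑ k, ∑ a, f k a * p k a := by
  simp_rw [sum_mul]
  rw [sum_comm]
  exact sum_congr rfl fun k _ => sum_pi_apply_mul_prod hp k (f k)

end Product

theorem card_filter_lt_le_one {σ : Type*} {s : Finset σ} {w : σ → ℝ} (hw0 : ∀ i ∈ s, 0 ≤ w i)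
    (hw : ∑ i ∈ s, w i ≤ 1) {τ : ℝ} (hτ : 1 / 2 ≤ τ) : #{i ∈ s | τ < w i} ≤ 1 := by
  classical
  refine card_le_one.2 fun a ha b hb => ?_
  by_contra hab
  rw [mem_filter] at ha hb
  have hpair : w a + w b ≤ ∑ i ∈ s, w i := by
    rw [← sum_pair hab]
    exact sum_le_sum_of_subset_of_nonneg (insert_subset ha.1 (singleton_subset_iff.2 hb.1))
      fun i hi _ => hw0 i hi
  linarith [ha.2, hb.2]

section Marginal

variable {σ ι : Type*} [Fintype σ]

def centroidGain (γ : ℝ) (t y : σ → Bool) : ℝ :=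
  ∑ i, (γ * (if t i ∧ y i then 1 else 0) + (if ¬ t i ∧ ¬ y i then 1 else 0))

theorem centroidGain_eq (γ : ℝ) (t y : σ → Bool) :
    centroidGain γ t y =
      ∑ i, if y i then γ * (if t i then 1 else 0) else 1 - (if t i then 1 else 0) := by
  refine sum_congr rfl fun i _ => ?_
  cases t i <;> cases y i <;> simp

variable [DecidableEq σ] [Fintype ι]

def marginal (p : (σ → Bool) → ℝ) (i : σ) : ℝ := ∑ t, (if t i then 1 else 0) * p t

noncomputable def avgMarginal (p : ι → (σ → Bool) → ℝ) (i : σ) : ℝ :=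
  1 / Fintype.card ι * ∑ k, marginal (p k) i

theorem marginal_nonneg {p : (σ → Bool) → ℝ} (hp : ∀ t, 0 ≤ p t) (i : σ) : 0 ≤ marginal p i :=
  sum_nonneg fun t _ => mul_nonneg (by split_ifs <;> norm_num) (hp t)

theorem sum_marginal_le_one {p : (σ → Bool) → ℝ} (hp0 : ∀ t, 0 ≤ p t) (hp1 : ∑ t, p t = 1)
    {s : Finset σ} (hs : ∀ t, p t ≠ 0 → (∑ i ∈ s, if t i then 1 else 0 : ℕ) ≤ 1) :
    ∑ i ∈ s, marginal p i ≤ 1 := by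
  calc ∑ i ∈ s, marginal p i
      = ∑ t, ((∑ i ∈ s, if t i then 1 else 0 : ℕ) : ℝ) * p t := by
        simp only [marginal, Nat.cast_sum, Nat.cast_ite, Nat.cast_one, Nat.cast_zero, sum_mul]
        exact sum_comm
    _ ≤ ∑ t, p t := by
        refine sum_le_sum fun t _ => ?_
        by_cases ht : p t = 0
        · simp [ht]
        · exact mul_le_of_le_one_left (hp0 t) (by exact_mod_cast hs t ht)
    _ = 1 := hp1

theorem avgMarginal_nonneg {p : ι → (σ → Bool) → ℝ} (hp : ∀ k t, 0 ≤ p k t) (i : σ) :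
    0 ≤ avgMarginal p i :=
  mul_nonneg (by positivity) (sum_nonneg fun k _ => marginal_nonneg (hp k) i)

theorem sum_avgMarginal_le_one {p : ι → (σ → Bool) → ℝ} (hp0 : ∀ k t, 0 ≤ p k t)
    (hp1 : ∀ k, ∑ t, p k t = 1) {s : Finset σ}
    (hs : ∀ k t, p k t ≠ 0 → (∑ i ∈ s, if t i then 1 else 0 : ℕ) ≤ 1) :
    ∑ i ∈ s, avgMarginal p i ≤ 1 := by
  calc ∑ i ∈ s, avgMarginal p i
      = 1 / Fintype.card ι * ∑ k, ∑ i ∈ s, marginal (p k) i := by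
        simp only [avgMarginal, ← mul_sum]
        rw [sum_comm]
    _ ≤ 1 / Fintype.card ι * Fintype.card ι := by
        gcongr
        simpa using sum_le_sum fun k (_ : k ∈ univ) => sum_marginal_le_one (hp0 k) (hp1 k) (hs k)
    _ ≤ 1 := by
        rcases (Fintype.card ι).eq_zero_or_pos with h | h
        · simp [h]
        · rw [one_div_mul_cancel (by positivity)]

theorem sum_centroidGain_mul {p : (σ → Bool) → ℝ} (hp : ∑ t, p t = 1) (γ : ℝ) (y : σ → Bool) :
    ∑ t, centroidGain γ t y * p t = ∑ i, if y i then γ * marginal p i else 1 - marginal p i := by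
  simp_rw [centroidGain_eq, sum_mul]
  rw [sum_comm]
  refine sum_congr rfl fun i _ => ?_
  cases y i
  · simp [sub_mul, sum_sub_distrib, hp, marginal]
  · simp [mul_sum, marginal]

theorem sum_pi_sum_centroidGain_mul_prod [DecidableEq ι] [Nonempty ι]
    {p : ι → (σ → Bool) → ℝ} (hp : ∀ k, ∑ t, p k t = 1) (γ : ℝ) (y : σ → Bool) :
    ∑ θ : ι → σ → Bool, (∑ k, centroidGain γ (θ k) y) * ∏ k, p k (θ k)
      = Fintype.card ι * ∑ i, if y i then γ * avgMarginal p i else 1 - avgMarginal p i := by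
  have hcard : (Fintype.card ι : ℝ) ≠ 0 := by positivity
  rw [sum_pi_sum_mul_prod hp fun _ t => centroidGain γ t y]
  simp_rw [sum_centroidGain_mul (hp _)]
  rw [sum_comm, mul_sum]
  refine sum_congr rfl fun i _ => ?_
  cases y i
  · simp [avgMarginal, mul_sub, sum_sub_distrib, hcard]
  · simp [avgMarginal, mul_sum, mul_left_comm _ γ, hcard]

end Marginal

theorem ite_le_ite_threshold {γ : ℝ} (hγ : 0 ≤ γ) (b : Bool) (s : ℝ) :
    (if b then γ * s else 1 - s) ≤ if 1 / (γ + 1) < s then γ * s else 1 - s := by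
  have hγ1 : 0 < γ + 1 := by linarith
  split_ifs with _ hs hs <;> rw [div_lt_iff₀ hγ1] at hs <;> nlinarith

end CentroidConsensus

open Finset CentroidConsensus

/-- thresholding the averaged marginals at 1/(γ+1) (γ ∈ [0,1])
gives a feasible maximizer of the expected homogeneous γ-centroid gain under
the product distribution. -/
theorem stmt11 {n L K : ℕ} (hK : 0 < K) (I : Fin L → Finset (Fin n))
    (Y : Finset (Fin n → Bool))
    (hY : ∀ y : Fin n → Bool, y ∈ Y ↔ ∀ l, (∑ i ∈ I l, if y i then 1 else 0 : ℕ) ≤ 1)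
    (γ : ℝ) (hγ0 : 0 ≤ γ) (hγ1 : γ ≤ 1)
    (p : Fin K → (Fin n → Bool) → ℝ)
    (hp0 : ∀ k t, 0 ≤ p k t) (hp1 : ∀ k, ∑ t ∈ Y, p k t = 1)
    (hsupp : ∀ k t, t ∉ Y → p k t = 0)
    (pbar : Fin n → ℝ)
    (hpbar : ∀ i, pbar i = (1/(K:ℝ)) * ∑ k, ∑ t ∈ Y, (if t i then (1:ℝ) else 0) * p k t)
    (ystar : Fin n → Bool) (hystar : ∀ i, ystar i = decide (1/(γ+1) < pbar i)) :
    ystar ∈ Y ∧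
    ∀ y ∈ Y,
      (∑ θ : Fin K → (Fin n → Bool),
        (∑ k, ∑ i, (γ * (if (θ k) i ∧ y i then (1:ℝ) else 0)
            + (if ¬ (θ k) i ∧ ¬ y i then (1:ℝ) else 0))) * ∏ k, p k (θ k))
      ≤ ∑ θ : Fin K → (Fin n → Bool),
        (∑ k, ∑ i, (γ * (if (θ k) i ∧ ystar i then (1:ℝ) else 0)
            + (if ¬ (θ k) i ∧ ¬ ystar i then (1:ℝ) else 0))) * ∏ k, p k (θ k) := by
  have hp_total : ∀ k, ∑ t, p k t = 1 := fun k => by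
    rw [← hp1 k]
    exact (sum_subset (subset_univ Y) fun t _ ht => hsupp k t ht).symm
  obtain rfl : pbar = avgMarginal p := funext fun i => by
    rw [hpbar, avgMarginal, Fintype.card_fin]
    congr 1
    exact sum_congr rfl fun k _ =>
      sum_subset (subset_univ Y) fun t _ ht => by rw [hsupp k t ht, mul_zero]
  refine ⟨(hY ystar).2 fun l => ?_, fun y _ => ?_⟩
  · have hτ : 1 / 2 ≤ 1 / (γ + 1) := one_div_le_one_div_of_le (by linarith) (by linarith)
    have hsum : ∑ i ∈ I l, avgMarginal p i ≤ 1 :=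
      sum_avgMarginal_le_one hp0 hp_total fun k t hkt =>
        (hY t).1 (by_contra fun ht => hkt (hsupp k t ht)) l
    calc (∑ i ∈ I l, if ystar i then 1 else 0 : ℕ)
        = #{i ∈ I l | 1 / (γ + 1) < avgMarginal p i} := by
          rw [card_filter]
          simp only [hystar, decide_eq_true_eq]
      _ ≤ 1 := card_filter_lt_le_one (fun i _ => avgMarginal_nonneg hp0 i) hsum hτ
  · have : Nonempty (Fin K) := ⟨⟨0, hK⟩⟩
    change ∑ θ : Fin K → Fin n → Bool, (∑ k, centroidGain γ (θ k) y) * ∏ k, p k (θ k)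
      ≤ ∑ θ : Fin K → Fin n → Bool, (∑ k, centroidGain γ (θ k) ystar) * ∏ k, p k (θ k)
    rw [sum_pi_sum_centroidGain_mul_prod hp_total, sum_pi_sum_centroidGain_mul_prod hp_total]
    gcongr with i
    simpa [hystar] using ite_le_ite_threshold hγ0 (y i) (avgMarginal p i)
end

section
/- Gain function of the AMA estimator vs γ-centroid: for pairwise-alignment binary matrices θ, y ∈ {0,1}^{m×m'} in the alignment space A(m,m') and gap factor G_f = 1/γ > 0, G^AMA(θ,y) := 2∑_{i,k}I(θ_{ik}=1)I(y_{ik}=1) + G_f[∑_i ∏_k I(θ_{ik}=0)I(y_{ik}=0) + ∑_k ∏_i I(θ_{ik}=0)I(y_{ik}=0)] satisfies G^AMA(θ,y) = (2/γ)G^centroid(θ,y) + (1/γ)A(θ,y) + C(θ), where G^centroid(θ,y) = ∑_{i,k}[γI(θ_{ik}=1)I(y_{ik}=1)+I(θ_{ik}=0)I(y_{ik}=0)], A(θ,y) = ∑_i ∑_{k1≠k2} I(θ_{ik1}=1)I(y_{ik2}=1) + ∑_k ∑_{i1≠i2} I(θ_{i1 k}=1)I(y_{i2 k}=1) ≥ 0,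 and C(θ) does not depend on y. -/
/-!
In an alignment every row and column of `θ` and of `y` has at most one `1`, so each gap product
`∏ₖ I(θᵢₖ = 0) I(yᵢₖ = 0)` equals `(1 - ∑ₖ θᵢₖ)(1 - ∑ₖ yᵢₖ)`. Expanding, the diagonal part of
`(∑ₖ θᵢₖ)(∑ₖ yᵢₖ)` is a match term and the off-diagonal part is the row half of `A`; likewise
`I(θᵢₖ = 0) I(yᵢₖ = 0) = 1 - θᵢₖ - yᵢₖ + θᵢₖ yᵢₖ` in the centroid gain. All terms in `∑ θ`, `∑ y`
and `∑ θ y` then cancel, and what is left, `(m + m' - 2 m m') / γ`, is constant.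
-/

open Finset

section BoolIndicators

variable {ι : Type*} [Fintype ι]

lemma eq_of_sum_ite_le_one {a : ι → Bool} (ha : (∑ k, if a k then 1 else 0 : ℕ) ≤ 1)
    {j k : ι} (hj : a j) (hk : a k) : j = k := by
  rw [sum_boole] at ha
  exact card_le_one.mp ha j (by simpa using hj) k (by simpa using hk)

lemma ite_not_and_not_eq (a b : Bool) :
    (if ¬ a ∧ ¬ b then (1:ℝ) else 0)
      = 1 - (if a then (1:ℝ) else 0) - (if b then (1:ℝ) else 0) + (if a ∧ b then (1:ℝ) else 0) := by
  cases a <;> cases b <;> norm_num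

lemma prod_one_sub_ite_eq_one_sub_sum {a : ι → Bool}
    (ha : (∑ k, if a k then 1 else 0 : ℕ) ≤ 1) :
    ∏ k, (1 - if a k then (1:ℝ) else 0) = 1 - ∑ k, if a k then (1:ℝ) else 0 := by
  by_cases h : ∃ k, a k
  · obtain ⟨k, hk⟩ := h
    have hother : ∀ j, j ≠ k → a j = false := fun j hjk => by
      by_contra hj
      exact hjk (eq_of_sum_ite_le_one ha (by simpa using hj) hk)
    rw [sum_eq_single k (fun j _ hjk => by simp [hother j hjk]) (by simp),
      prod_eq_zero (mem_univ k) (by simp [hk])]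
    simp [hk]
  · simp only [not_exists, Bool.not_eq_true] at h
    simp [h]

lemma sum_ite_mul_sum_ite [DecidableEq ι] (a b : ι → Bool) :
    (∑ k, if a k then (1:ℝ) else 0) * (∑ k, if b k then (1:ℝ) else 0)
      = (∑ k, if a k ∧ b k then (1:ℝ) else 0)
        + ∑ k₁, ∑ k₂, if k₁ ≠ k₂ ∧ a k₁ ∧ b k₂ then (1:ℝ) else 0 := by
  have hsplit : ∀ k₁ k₂ : ι,
      (if a k₁ then (1:ℝ) else 0) * (if b k₂ then (1:ℝ) else 0)
        = (if k₁ = k₂ ∧ a k₁ ∧ b k₂ then (1:ℝ) else 0)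
          + (if k₁ ≠ k₂ ∧ a k₁ ∧ b k₂ then (1:ℝ) else 0) := fun k₁ k₂ => by
    by_cases h : k₁ = k₂ <;> cases a k₁ <;> cases b k₂ <;> simp [h]
  simp only [sum_mul_sum, hsplit, sum_add_distrib]
  congr 1
  refine sum_congr rfl fun k₁ _ => ?_
  rw [sum_eq_single k₁ (fun k₂ _ h => by simp [Ne.symm h]) (by simp)]
  simp

lemma prod_ite_not_and_not_eq [DecidableEq ι] {a b : ι → Bool}
    (ha : (∑ k, if a k then 1 else 0 : ℕ) ≤ 1) (hb : (∑ k, if b k then 1 else 0 : ℕ) ≤ 1) :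
    ∏ k, (if ¬ a k ∧ ¬ b k then (1:ℝ) else 0)
      = 1 - (∑ k, if a k then (1:ℝ) else 0) - (∑ k, if b k then (1:ℝ) else 0)
        + (∑ k, if a k ∧ b k then (1:ℝ) else 0)
        + ∑ k₁, ∑ k₂, if k₁ ≠ k₂ ∧ a k₁ ∧ b k₂ then (1:ℝ) else 0 := by
  have hfactor : ∀ k, (if ¬ a k ∧ ¬ b k then (1:ℝ) else 0)
      = (1 - if a k then (1:ℝ) else 0) * (1 - if b k then (1:ℝ) else 0) := fun k => by
    cases a k <;> cases b k <;> simp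
  simp only [hfactor, prod_mul_distrib, prod_one_sub_ite_eq_one_sub_sum ha,
    prod_one_sub_ite_eq_one_sub_sum hb]
  linear_combination sum_ite_mul_sum_ite a b

end BoolIndicators

lemma sum_prod_ite_not_and_not_eq {ι κ : Type*} [Fintype ι] [Fintype κ] [DecidableEq κ]
    {θ y : ι → κ → Bool}
    (hθ : ∀ i, (∑ k, if θ i k then 1 else 0 : ℕ) ≤ 1)
    (hy : ∀ i, (∑ k, if y i k then 1 else 0 : ℕ) ≤ 1) :
    ∑ i, ∏ k, (if ¬ θ i k ∧ ¬ y i k then (1:ℝ) else 0)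
      = Fintype.card ι - (∑ i, ∑ k, if θ i k then (1:ℝ) else 0)
        - (∑ i, ∑ k, if y i k then (1:ℝ) else 0)
        + (∑ i, ∑ k, if θ i k ∧ y i k then (1:ℝ) else 0)
        + ∑ i, ∑ k₁, ∑ k₂, if k₁ ≠ k₂ ∧ θ i k₁ ∧ y i k₂ then (1:ℝ) else 0 := by
  simp only [prod_ite_not_and_not_eq (hθ _) (hy _), sum_add_distrib, sum_sub_distrib]
  simp

/-- decomposition of the AMA gain with gap factor G_f = 1/γ into
the γ-centroid gain, a nonnegative bias term A, and a term depending only on θ. -/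
theorem stmt17 {m m' : ℕ} (γ : ℝ) (hγ : 0 < γ)
    (inA : (Fin m → Fin m' → Bool) → Prop)
    (hinA : ∀ θ, inA θ ↔
      ((∀ i, (∑ k, if θ i k then 1 else 0 : ℕ) ≤ 1) ∧
       (∀ k, (∑ i, if θ i k then 1 else 0 : ℕ) ≤ 1) ∧
       (∀ i j k l, i < j → l < k → ¬(θ i k = true ∧ θ j l = true))))
    (GAMA Gc Aterm : (Fin m → Fin m' → Bool) → (Fin m → Fin m' → Bool) → ℝ)
    (hGAMA : ∀ θ y, GAMA θ y =
      2 * (∑ i, ∑ k, if θ i k ∧ y i k then (1:ℝ) else 0) +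
      (1/γ) * ((∑ i, ∏ k, if ¬ θ i k ∧ ¬ y i k then (1:ℝ) else 0) +
               (∑ k, ∏ i, if ¬ θ i k ∧ ¬ y i k then (1:ℝ) else 0)))
    (hGc : ∀ θ y, Gc θ y = ∑ i, ∑ k,
      (γ * (if θ i k ∧ y i k then (1:ℝ) else 0) + (if ¬ θ i k ∧ ¬ y i k then (1:ℝ) else 0)))
    (hA : ∀ θ y, Aterm θ y =
      (∑ i, ∑ k1, ∑ k2, if k1 ≠ k2 ∧ θ i k1 ∧ y i k2 then (1:ℝ) else 0) +
      (∑ k, ∑ i1, ∑ i2, if i1 ≠ i2 ∧ θ i1 k ∧ y i2 k then (1:ℝ) else 0)) :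
    (∀ θ y, 0 ≤ Aterm θ y) ∧
    ∃ C : (Fin m → Fin m' → Bool) → ℝ, ∀ θ y, inA θ → inA y →
      GAMA θ y = (2/γ) * Gc θ y + (1/γ) * Aterm θ y + C θ := by
  refine ⟨fun θ y => by rw [hA]; positivity,
    fun _ => ((m : ℝ) + m' - 2 * m * m') / γ, fun θ y hθ hy => ?_⟩
  obtain ⟨hθrow, hθcol, -⟩ := (hinA θ).mp hθ
  obtain ⟨hyrow, hycol, -⟩ := (hinA y).mp hy
  have hrow := sum_prod_ite_not_and_not_eq hθrow hyrow
  have hcol := sum_prod_ite_not_and_not_eq (θ := fun k i => θ i k) (y := fun k i => y i k)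
    hθcol hycol
  have hGc' : Gc θ y = γ * (∑ i, ∑ k, if θ i k ∧ y i k then (1:ℝ) else 0) + m * m'
      - (∑ i, ∑ k, if θ i k then (1:ℝ) else 0) - (∑ i, ∑ k, if y i k then (1:ℝ) else 0)
      + (∑ i, ∑ k, if θ i k ∧ y i k then (1:ℝ) else 0) := by
    simp only [hGc, ite_not_and_not_eq, sum_add_distrib, sum_sub_distrib, ← mul_sum, sum_const,
      card_univ, Fintype.card_fin, nsmul_eq_mul, mul_one]
    ring
  rw [sum_comm (f := fun k i => if θ i k = true then (1:ℝ) else 0),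
    sum_comm (f := fun k i => if y i k = true then (1:ℝ) else 0),
    sum_comm (f := fun k i => if θ i k = true ∧ y i k = true then (1:ℝ) else 0)] at hcol
  simp only [Fintype.card_fin] at hrow hcol
  rw [hGAMA, hGc', hA, hrow, hcol]
  field_simp
  ring
end
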